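/- ∑_{k=1}^∞ (729/784)^k / C(3k,k) = 27/169 + (994√3/2197)·arctan(√3/5) − (112/2197)·log(16/7). -/

import Mathlib

/-!
Writing `1 / C(3k,k) = (3k+1) ∫₀¹ tᵏ (1-t)²ᵏ dt` (the Beta integral) and summing under the
integral, the series becomes `∫₀¹ u (4 - u) / (1 - u)² dt` with `u = (729/784) t (1-t)²`.
Since `784 (1 - u) = (16 - 9t)(81t² - 18t + 49)`, this integrand is a rational function with
an explicit elementary primitive, whose values at `0` and `1` give the closed form once the
arctangent terms are combined via `arctan (2/√3) + arctan (1/(4√3)) = 3 arctan (√3/5)`.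
-/

open Real Set
open scoped Nat

theorem integral_pow_mul_one_sub_pow (a b : ℕ) :
    ∫ x in (0:ℝ)..1, x ^ a * (1 - x) ^ b = (a ! * b ! : ℝ) / (a + b + 1)! := by
  have h := Complex.betaIntegral_eq_Gamma_mul_div (a + 1) (b + 1) (by simp; positivity)
    (by simp; positivity)
  rw [show ((a : ℂ) + 1 + (b + 1)) = ((a + b + 1 : ℕ) : ℂ) + 1 by push_cast; ring,
    Complex.Gamma_nat_eq_factorial, Complex.Gamma_nat_eq_factorial,
    Complex.Gamma_nat_eq_factorial, Complex.betaIntegral] at h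
  simp only [add_sub_cancel_right, Complex.cpow_natCast] at h
  apply Complex.ofReal_injective
  rw [← intervalIntegral.integral_ofReal]
  push_cast
  exact h

theorem inv_choose_eq_integral {n k : ℕ} (hk : k ≤ n) :
    ((n.choose k : ℝ))⁻¹ = (n + 1) * ∫ t in (0:ℝ)..1, t ^ k * (1 - t) ^ (n - k) := by
  rw [integral_pow_mul_one_sub_pow, Nat.add_sub_cancel' hk, Nat.cast_choose ℝ hk,
    Nat.factorial_succ]
  push_cast
  field_simp

theorem pow_div_choose_three_mul_eq_integral (x : ℝ) (m : ℕ) :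
    x ^ m / ((3 * m).choose m : ℕ) =
      ∫ t in (0:ℝ)..1, (3 * m + 1) * (x * t * (1 - t) ^ 2) ^ m := by
  rw [div_eq_mul_inv, inv_choose_eq_integral (by omega), show 3 * m - m = 2 * m by omega,
    intervalIntegral.integral_const_mul]
  simp_rw [mul_pow, ← pow_mul, ← intervalIntegral.integral_const_mul]
  push_cast
  congr 1 with t
  ring

theorem hasSum_three_mul_add_one_mul_pow_succ {𝕜 : Type*} [NormedField 𝕜] [CompleteSpace 𝕜]
    {u : 𝕜} (hu : ‖u‖ < 1) :
    HasSum (fun k : ℕ => (3 * (k + 1) + 1) * u ^ (k + 1)) (u * (4 - u) / (1 - u) ^ 2) := by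
  have hu1 : 1 - u ≠ 0 := sub_ne_zero.2 fun h => by simp [← h] at hu
  have h := (hasSum_nat_add_iff' 1).2 <|
    ((hasSum_coe_mul_geometric_of_norm_lt_one hu).mul_left 3).add
      (hasSum_geometric_of_norm_lt_one hu)
  simp only [Finset.sum_range_one, Nat.cast_add, Nat.cast_one, Nat.cast_zero] at h
  rw [show u * (4 - u) / (1 - u) ^ 2
      = 3 * (u / (1 - u) ^ 2) + (1 - u)⁻¹ - (3 * (0 * u ^ 0) + u ^ 0) by field_simp; ring]
  exact h.congr_fun fun k => by ring

theorem abs_mul_mul_one_sub_sq_le (x : ℝ) {t : ℝ} (ht : t ∈ Icc (0:ℝ) 1) :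
    |x * t * (1 - t) ^ 2| ≤ |x| := by
  obtain ⟨h0, h1⟩ := ht
  rw [mul_assoc, abs_mul]
  refine mul_le_of_le_one_right (abs_nonneg x) ?_
  rw [abs_of_nonneg (by positivity)]
  exact mul_le_one₀ h1 (by positivity) (pow_le_one₀ (by linarith) (by linarith))

theorem hasSum_pow_succ_div_choose_three_mul {x : ℝ} (hx : |x| < 1) :
    HasSum (fun k : ℕ => x ^ (k + 1) / ((3 * (k + 1)).choose (k + 1) : ℕ))
      (∫ t in (0:ℝ)..1, x * t * (1 - t) ^ 2 * (4 - x * t * (1 - t) ^ 2)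
        / (1 - x * t * (1 - t) ^ 2) ^ 2) := by
  have hbound := hasSum_three_mul_add_one_mul_pow_succ (u := |x|) (by simpa using hx)
  refine (intervalIntegral.hasSum_integral_of_dominated_convergence
    (F := fun (k : ℕ) t => (3 * ((k : ℝ) + 1) + 1) * (x * t * (1 - t) ^ 2) ^ (k + 1))
    (fun (k : ℕ) _ => (3 * (k + 1) + 1) * |x| ^ (k + 1))
    (fun k => (by fun_prop : Continuous _).aestronglyMeasurable) ?_
    (.of_forall fun _ _ => hbound.summable) intervalIntegrable_const ?_).congr_fun
    fun k => by exact_mod_cast pow_div_choose_three_mul_eq_integral x (k + 1)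
  · refine fun k => .of_forall fun t ht => ?_
    rw [uIoc_of_le zero_le_one] at ht
    rw [norm_mul, norm_pow, Real.norm_eq_abs, Real.norm_eq_abs, abs_of_pos (by positivity)]
    exact mul_le_mul_of_nonneg_left (pow_le_pow_left₀ (abs_nonneg _)
      (abs_mul_mul_one_sub_sq_le x (Ioc_subset_Icc_self ht)) _) (by positivity)
  · refine .of_forall fun t ht => hasSum_three_mul_add_one_mul_pow_succ ?_
    rw [uIoc_of_le zero_le_one] at ht
    exact (abs_mul_mul_one_sub_sq_le x (Ioc_subset_Icc_self ht)).trans_lt hx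

theorem hasDerivAt_arctan_nine_mul_sub_one_div (t : ℝ) :
    HasDerivAt (fun t => arctan ((9 * t - 1) / (4 * √3)))
      (36 * √3 / (81 * t ^ 2 - 18 * t + 49)) t := by
  have hs : √3 ^ 2 = 3 := sq_sqrt (by norm_num)
  have hden : 1 + ((9 * t - 1) / (4 * √3)) ^ 2 = (81 * t ^ 2 - 18 * t + 49) / 48 := by
    rw [div_pow, mul_pow, hs]
    ring
  refine ((((hasDerivAt_id' t).const_mul 9).sub_const 1).div_const (4 * √3)).arctan.congr_deriv ?_
  rw [hden]
  generalize 81 * t ^ 2 - 18 * t + 49 = Q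
  field_simp
  rw [hs]
  ring

/-- Partial fractions of `u (4 - u) / (1 - u)²`, `u = (729/784) t (1-t)²`, over the factors
`16 - 9t` and `81t² - 18t + 49` of `784 (1 - u)`, integrated term by term. -/
noncomputable def primitive (t : ℝ) : ℝ :=
  224 / 6591 * log (16 - 9 * t) + 12544 / 4563 * (16 - 9 * t)⁻¹
    - 112 / 6591 * log (81 * t ^ 2 - 18 * t + 49)
    + 994 * √3 / 6591 * arctan ((9 * t - 1) / (4 * √3))
    - 62720 / 1521 * (81 * t ^ 2 - 18 * t + 49)⁻¹
    + 23128 / 4563 * ((9 * t - 1) / (81 * t ^ 2 - 18 * t + 49)) - t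

theorem one_sub_mul_mul_one_sub_sq_eq (t : ℝ) :
    1 - 729 / 784 * t * (1 - t) ^ 2 = (16 - 9 * t) * (81 * t ^ 2 - 18 * t + 49) / 784 := by
  ring

theorem one_sub_mul_mul_one_sub_sq_pos {t : ℝ} (ht : t < 16 / 9) :
    0 < 1 - 729 / 784 * t * (1 - t) ^ 2 := by
  rw [one_sub_mul_mul_one_sub_sq_eq]
  have hQ : 0 < 81 * t ^ 2 - 18 * t + 49 := by nlinarith [sq_nonneg (9 * t - 1)]
  have hL : 0 < 16 - 9 * t := by linarith
  positivity

theorem hasDerivAt_primitive {t : ℝ} (ht : t < 16 / 9) :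
    HasDerivAt primitive
      (729 / 784 * t * (1 - t) ^ 2 * (4 - 729 / 784 * t * (1 - t) ^ 2)
        / (1 - 729 / 784 * t * (1 - t) ^ 2) ^ 2) t := by
  have hs : √3 ^ 2 = 3 := sq_sqrt (by norm_num)
  have hL : 16 - 9 * t ≠ 0 := by linarith
  have hQ : 81 * t ^ 2 - 18 * t + 49 ≠ 0 := by nlinarith [sq_nonneg (9 * t - 1)]
  have dL : HasDerivAt (fun t => 16 - 9 * t) (-9) t := by
    simpa using ((hasDerivAt_id' t).const_mul 9).const_sub 16
  have dQ : HasDerivAt (fun t => 81 * t ^ 2 - 18 * t + 49) (162 * t - 18) t :=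
    ((((hasDerivAt_pow 2 t).const_mul 81).sub ((hasDerivAt_id' t).const_mul 18)).add_const
      49).congr_deriv (by push_cast; ring)
  have dN : HasDerivAt (fun t => 9 * t - 1) 9 t := by
    simpa using ((hasDerivAt_id' t).const_mul 9).sub_const 1
  have h := (((((((dL.log hL).const_mul (224 / 6591)).add
    ((dL.inv hL).const_mul (12544 / 4563))).sub ((dQ.log hQ).const_mul (112 / 6591))).add
    ((hasDerivAt_arctan_nine_mul_sub_one_div t).const_mul (994 * √3 / 6591))).sub
    ((dQ.inv hQ).const_mul (62720 / 1521))).add ((dN.div dQ hQ).const_mul (23128 / 4563))).sub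
    (hasDerivAt_id' t)
  refine h.congr_deriv ?_
  rw [one_sub_mul_mul_one_sub_sq_eq, show 729 / 784 * t * (1 - t) ^ 2
    = 1 - (16 - 9 * t) * (81 * t ^ 2 - 18 * t + 49) / 784 by ring]
  generalize hQdef : 81 * t ^ 2 - 18 * t + 49 = Q at hQ
  field_simp
  rw [hs]
  subst hQdef
  ring

theorem arctan_two_div_sqrt_three_add_arctan :
    arctan (2 / √3) + arctan (1 / (4 * √3)) = 3 * arctan (√3 / 5) := by
  have hs : √3 * √3 = 3 := mul_self_sqrt (by norm_num)
  have add_arctan {x y : ℝ} (z : ℝ) {p : ℝ} (hp : x * y = p) (hp1 : p < 1)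
      (hz : (x + y) / (1 - p) = z) : arctan x + arctan y = arctan z := by
    rw [arctan_add (hp ▸ hp1), hp, hz]
  have double : arctan (√3 / 5) + arctan (√3 / 5) = arctan (5 * √3 / 11) :=
    add_arctan _ (p := 3 / 25) (by field_simp; linarith) (by norm_num) (by field_simp; ring)
  have triple : arctan (5 * √3 / 11) + arctan (√3 / 5) = arctan (9 * √3 / 10) :=
    add_arctan _ (p := 3 / 11) (by field_simp; linarith) (by norm_num) (by field_simp; ring)
  have lhs : arctan (2 / √3) + arctan (1 / (4 * √3)) = arctan (9 * √3 / 10) :=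
    add_arctan _ (p := 1 / 6) (by field_simp; linarith) (by norm_num) (by field_simp; linarith)
  rw [lhs, ← triple, ← double]
  ring

theorem primitive_one_sub_primitive_zero :
    primitive 1 - primitive 0
      = 27 / 169 + 994 * √3 / 2197 * arctan (√3 / 5) - 112 / 2197 * log (16 / 7) := by
  have h112 : log 112 = log 16 + log 7 := by
    rw [← log_mul (by norm_num) (by norm_num)]; norm_num
  have h49 : log 49 = 2 * log 7 := by
    rw [show (49 : ℝ) = 7 ^ 2 by norm_num, log_pow]; norm_num
  have h16_7 : log (16 / 7) = log 16 - log 7 := log_div (by norm_num) (by norm_num)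
  have at1 : (9 * 1 - 1) / (4 * √3) = 2 / √3 := by field_simp; norm_num
  have at0 : (9 * 0 - 1) / (4 * √3) = -(1 / (4 * √3)) := by ring
  have harctan := arctan_two_div_sqrt_three_add_arctan
  simp only [primitive, at1, at0, arctan_neg]
  generalize arctan (2 / √3) = a, arctan (1 / (4 * √3)) = b at harctan ⊢
  norm_num [h112, h49, h16_7]
  linear_combination 994 * √3 / 6591 * harctan

theorem integral_eq_closed_form :
    ∫ t in (0:ℝ)..1, 729 / 784 * t * (1 - t) ^ 2 * (4 - 729 / 784 * t * (1 - t) ^ 2)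
        / (1 - 729 / 784 * t * (1 - t) ^ 2) ^ 2
      = 27 / 169 + 994 * √3 / 2197 * arctan (√3 / 5) - 112 / 2197 * log (16 / 7) := by
  have hlt {t : ℝ} (ht : t ∈ uIcc (0:ℝ) 1) : t < 16 / 9 := by
    rw [uIcc_of_le zero_le_one] at ht
    linarith [ht.2]
  rw [← primitive_one_sub_primitive_zero]
  refine intervalIntegral.integral_eq_sub_of_hasDerivAt
    (fun t ht => hasDerivAt_primitive (hlt ht)) (ContinuousOn.intervalIntegrable ?_)
  exact ContinuousOn.div (by fun_prop) (by fun_prop)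
    fun t ht => pow_ne_zero 2 (one_sub_mul_mul_one_sub_sq_pos (hlt ht)).ne'

theorem stmt_11 :
    ∑' k : ℕ, (729/784 : ℝ)^(k+1) / ((((3*(k+1)).choose (k+1) : ℕ)) : ℝ) =
    27/169 + (994*Real.sqrt 3/2197)*Real.arctan (Real.sqrt 3/5) - (112/2197)*Real.log (16/7) := by
  have hx : |(729 / 784 : ℝ)| < 1 := by rw [abs_of_pos] <;> norm_num
  exact (hasSum_pow_succ_div_choose_three_mul hx).tsum_eq.trans integral_eq_closed_form
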